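/- arXiv:2604.25552 — 3 statements merged into one kernel-verified Lean document; each statement's English description precedes it below -/
import Mathlib

section
/- For real numbers 0 < ε₁ < ε₂ < 1/2, define φ(ε₁,ε₂) = ln((1-ε₁)/(1-ε₂)) / ln(((1-ε₁)ε₂)/((1-ε₂)ε₁)). Then ε₁ < φ(ε₁,ε₂) < ε₂. -/
/-!
Writing `a = log ((1 - ε₁) / (1 - ε₂))` and `b = log (ε₂ / ε₁)`, both positive, we have
`φ = a / (a + b)`. Then `ε₁ < φ` says `ε₁ b < (1 - ε₁) a` and `φ < ε₂` says `(1 - ε₂) a < ε₂ b`;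
these are the positivity of the binary Kullback–Leibler divergences `D(ε₁ ‖ ε₂)` and `D(ε₂ ‖ ε₁)`.
-/

open Real

/-- Strict concavity of `log`: the weights `p, 1 - p` average `q / p` and `(1 - q) / (1 - p)`
to `1`. -/
theorem mul_log_div_add_mul_log_div_neg {p q : ℝ} (hp0 : 0 < p) (hp1 : p < 1) (hq0 : 0 < q)
    (hq1 : q < 1) (hpq : p ≠ q) :
    p * log (q / p) + (1 - p) * log ((1 - q) / (1 - p)) < 0 := by
  have hp1' : 0 < 1 - p := by linarith
  have hne : q / p ≠ (1 - q) / (1 - p) := by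
    rw [Ne, div_eq_div_iff hp0.ne' hp1'.ne']
    exact fun h => hpq (by linarith)
  have h := strictConcaveOn_log_Ioi.2 (Set.mem_Ioi.2 (div_pos hq0 hp0))
    (Set.mem_Ioi.2 (div_pos (by linarith) hp1')) hne hp0 hp1' (by ring)
  simp only [smul_eq_mul] at h
  rwa [mul_div_cancel₀ _ hp0.ne', mul_div_cancel₀ _ hp1'.ne', add_sub_cancel, log_one] at h

theorem phi_between (ε₁ ε₂ : ℝ) (h0 : 0 < ε₁) (h12 : ε₁ < ε₂) (h2 : ε₂ < 1/2) :
    ε₁ < Real.log ((1 - ε₁) / (1 - ε₂)) / Real.log (((1 - ε₁) * ε₂) / ((1 - ε₂) * ε₁)) ∧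
    Real.log ((1 - ε₁) / (1 - ε₂)) / Real.log (((1 - ε₁) * ε₂) / ((1 - ε₂) * ε₁)) < ε₂ := by
  have hε₂ : 0 < ε₂ := h0.trans h12
  have h1ε₁ : 0 < 1 - ε₁ := by linarith
  have h1ε₂ : 0 < 1 - ε₂ := by linarith
  have gibbs₁₂ := mul_log_div_add_mul_log_div_neg h0 (by linarith) hε₂ (by linarith) h12.ne
  have gibbs₂₁ := mul_log_div_add_mul_log_div_neg hε₂ (by linarith) h0 (by linarith) h12.ne'
  have hb : log ε₁ < log ε₂ := log_lt_log h0 h12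
  have ha : log (1 - ε₂) < log (1 - ε₁) := log_lt_log h1ε₂ (by linarith)
  simp only [log_div h1ε₁.ne' h1ε₂.ne', log_div h1ε₂.ne' h1ε₁.ne', log_div h0.ne' hε₂.ne',
    log_div hε₂.ne' h0.ne', log_div (mul_pos h1ε₁ hε₂).ne' (mul_pos h1ε₂ h0).ne',
    log_mul h1ε₁.ne' hε₂.ne', log_mul h1ε₂.ne' h0.ne']
    at gibbs₁₂ gibbs₂₁ ⊢
  have hden : 0 < log (1 - ε₁) + log ε₂ - (log (1 - ε₂) + log ε₁) := by linarith
  constructor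
  · rw [lt_div_iff₀ hden]; linarith
  · rw [div_lt_iff₀ hden]; linarith
end

section
/- Let 0 < ε₁ < ε₂ < 1/2 and σ ∈ [ε₁, ε₂], p₁, p₂ > 0 with p₁ + p₂ ≤ 1. Define F(x) = f_{σ,ε₁,p₁}(−x) + f_{σ,ε₂,p₂}(x), where f_{σ,ε,p}(x) = (p+x)·f_c((pε+xσ)/(p+x)) and f_c(u) = 1 + u·log₂ u + (1−u)·log₂(1−u). Then F'(0) = log₂((1−ε₂)/(1−ε₁)) + σ·log₂(((1−ε₁)ε₂)/((1−ε₂)ε₁)) = (σ − φ(ε₁,ε₂))·log₂(((1−ε₁)ε₂)/((1−ε₂)ε₁)), where φ(ε₁,ε₂) = ln((1−ε₁)/(1−ε₂))/ln(((1−ε₁)ε₂)/((1−ε₂)ε₁)). -/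
/-!
With `u(x) = (p ε + x σ) / (p + x)` we have `u(0) = ε` and `u'(0) = (σ - ε) / p`, so the product
and chain rules give `f_{σ,ε,p}'(0) = f_c(ε) + (σ - ε) f_c'(ε)`. As `f_c = 1 - h₂ / log 2` and the
binary entropy has `h₂'(u) = log (1 - u) - log u`, this collapses to
`1 + σ logb 2 ε + (1 - σ) logb 2 (1 - ε)`, and `F'(0)` is the difference of two such values.
The second identity is algebra with `log`, valid because `((1 - ε₁) ε₂) / ((1 - ε₂) ε₁) > 1`.
-/

open Real

/-- The capacity `1 - h₂(u)` of the binary symmetric channel with crossover probability `u`. -/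
noncomputable def bscCapacity (u : ℝ) : ℝ :=
  1 + u * logb 2 u + (1 - u) * logb 2 (1 - u)

/-- The paper's `f_{σ,ε,p}(x)`. -/
noncomputable def weightedCapacity (p ε σ x : ℝ) : ℝ :=
  (p + x) * bscCapacity ((p * ε + x * σ) / (p + x))

lemma bscCapacity_eq_one_sub_binEntropy (u : ℝ) :
    bscCapacity u = 1 - binEntropy u / log 2 := by
  simp only [bscCapacity, binEntropy, logb, log_inv]
  ring

lemma hasDerivAt_bscCapacity {u : ℝ} (hu₀ : u ≠ 0) (hu₁ : u ≠ 1) :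
    HasDerivAt bscCapacity (logb 2 u - logb 2 (1 - u)) u := by
  have h := ((hasDerivAt_binEntropy hu₀ hu₁).div_const (log 2)).const_sub 1
  rw [funext bscCapacity_eq_one_sub_binEntropy]
  refine h.congr_deriv ?_
  simp only [logb]
  ring

lemma hasDerivAt_weightedCapacity {p ε : ℝ} (σ : ℝ) (hp : p ≠ 0) (hε₀ : ε ≠ 0) (hε₁ : ε ≠ 1) :
    HasDerivAt (weightedCapacity p ε σ) (1 + σ * logb 2 ε + (1 - σ) * logb 2 (1 - ε)) 0 := by
  have hlin : HasDerivAt (fun x : ℝ => p + x) 1 0 := (hasDerivAt_id 0).const_add p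
  have hnum : HasDerivAt (fun x : ℝ => p * ε + x * σ) σ 0 := (hasDerivAt_mul_const σ).const_add _
  have hu : HasDerivAt (fun x : ℝ => (p * ε + x * σ) / (p + x)) ((σ - ε) / p) 0 := by
    refine (hnum.div hlin (by simpa using hp)).congr_deriv ?_
    simp only [zero_mul, add_zero, mul_one]
    field_simp
  have hu₀ : (p * ε + 0 * σ) / (p + 0) = ε := by
    rw [zero_mul, add_zero, add_zero, mul_div_cancel_left₀ ε hp]
  refine (hlin.mul ((hasDerivAt_bscCapacity hε₀ hε₁).comp_of_eq 0 hu hu₀.symm)).congr_deriv ?_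
  simp only [Function.comp_apply, hu₀, bscCapacity]
  field_simp
  ring

theorem deriv_F_at_zero_general (ε₁ ε₂ σ p₁ p₂ : ℝ)
    (h1 : 0 < ε₁) (h12 : ε₁ < ε₂) (h2 : ε₂ < 1/2)
    (hp1 : 0 < p₁) (hp2 : 0 < p₂) :
    deriv (fun x : ℝ =>
        (p₁ + -x) * (1 + ((p₁ * ε₁ + (-x) * σ) / (p₁ + -x)) *
              Real.logb 2 ((p₁ * ε₁ + (-x) * σ) / (p₁ + -x))
            + (1 - (p₁ * ε₁ + (-x) * σ) / (p₁ + -x)) *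
              Real.logb 2 (1 - (p₁ * ε₁ + (-x) * σ) / (p₁ + -x)))
        + (p₂ + x) * (1 + ((p₂ * ε₂ + x * σ) / (p₂ + x)) *
              Real.logb 2 ((p₂ * ε₂ + x * σ) / (p₂ + x))
            + (1 - (p₂ * ε₂ + x * σ) / (p₂ + x)) *
              Real.logb 2 (1 - (p₂ * ε₂ + x * σ) / (p₂ + x)))) 0
      = Real.logb 2 ((1 - ε₂) / (1 - ε₁)) + σ * Real.logb 2 (((1 - ε₁) * ε₂) / ((1 - ε₂) * ε₁)) ∧
    Real.logb 2 ((1 - ε₂) / (1 - ε₁)) + σ * Real.logb 2 (((1 - ε₁) * ε₂) / ((1 - ε₂) * ε₁))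
      = (σ - Real.log ((1 - ε₁) / (1 - ε₂)) / Real.log (((1 - ε₁) * ε₂) / ((1 - ε₂) * ε₁))) *
          Real.logb 2 (((1 - ε₁) * ε₂) / ((1 - ε₂) * ε₁)) := by
  have hε₂ : 0 < ε₂ := h1.trans h12
  have hε₁' : 0 < 1 - ε₁ := by linarith
  have hε₂' : 0 < 1 - ε₂ := by linarith
  have hf₁ := hasDerivAt_weightedCapacity σ hp1.ne' h1.ne' (by linarith)
  have hf₂ := hasDerivAt_weightedCapacity σ hp2.ne' hε₂.ne' (by linarith)
  have hF := (hf₁.comp_of_eq 0 (hasDerivAt_neg 0) neg_zero.symm).add hf₂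
  have hR : 1 < ((1 - ε₁) * ε₂) / ((1 - ε₂) * ε₁) := by
    rw [one_lt_div (by positivity)]
    nlinarith
  have hL : log (((1 - ε₁) * ε₂) / ((1 - ε₂) * ε₁)) ≠ 0 := (log_pos hR).ne'
  refine ⟨?_, ?_⟩
  · -- the function is defeq to `weightedCapacity p₁ ε₁ σ ∘ Neg.neg + weightedCapacity p₂ ε₂ σ`
    refine hF.deriv.trans ?_
    simp only [logb]
    rw [log_div hε₂'.ne' hε₁'.ne', log_div (by positivity) (by positivity),
      log_mul hε₁'.ne' hε₂.ne', log_mul hε₂'.ne' h1.ne']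
    ring
  · rw [← inv_div, logb, log_inv]
    simp only [logb]
    generalize log (((1 - ε₁) * ε₂) / ((1 - ε₂) * ε₁)) = L at hL ⊢
    field_simp
    ring

theorem deriv_F_at_zero (ε₁ ε₂ σ p₁ p₂ : ℝ)
    (h1 : 0 < ε₁) (h12 : ε₁ < ε₂) (h2 : ε₂ < 1/2)
    (hσ1 : ε₁ ≤ σ) (hσ2 : σ ≤ ε₂)
    (hp1 : 0 < p₁) (hp2 : 0 < p₂) (hp : p₁ + p₂ ≤ 1) :
    deriv (fun x : ℝ =>
        (p₁ + -x) * (1 + ((p₁ * ε₁ + (-x) * σ) / (p₁ + -x)) *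
              Real.logb 2 ((p₁ * ε₁ + (-x) * σ) / (p₁ + -x))
            + (1 - (p₁ * ε₁ + (-x) * σ) / (p₁ + -x)) *
              Real.logb 2 (1 - (p₁ * ε₁ + (-x) * σ) / (p₁ + -x)))
        + (p₂ + x) * (1 + ((p₂ * ε₂ + x * σ) / (p₂ + x)) *
              Real.logb 2 ((p₂ * ε₂ + x * σ) / (p₂ + x))
            + (1 - (p₂ * ε₂ + x * σ) / (p₂ + x)) *
              Real.logb 2 (1 - (p₂ * ε₂ + x * σ) / (p₂ + x)))) 0
      = Real.logb 2 ((1 - ε₂) / (1 - ε₁)) + σ * Real.logb 2 (((1 - ε₁) * ε₂) / ((1 - ε₂) * ε₁)) ∧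
    Real.logb 2 ((1 - ε₂) / (1 - ε₁)) + σ * Real.logb 2 (((1 - ε₁) * ε₂) / ((1 - ε₂) * ε₁))
      = (σ - Real.log ((1 - ε₁) / (1 - ε₂)) / Real.log (((1 - ε₁) * ε₂) / ((1 - ε₂) * ε₁))) *
          Real.logb 2 (((1 - ε₁) * ε₂) / ((1 - ε₂) * ε₁)) :=
  deriv_F_at_zero_general ε₁ ε₂ σ p₁ p₂ h1 h12 h2 hp1 hp2
end

section
/- Let ε_{j−1} < ε_j < ε_{j+1} and ε'_{j−1} < ε'_j < ε'_{j+1} be reals in [0,1/2], let p_{j−1},p_j,p_{j+1},p'_{j−1},p'_j,p'_{j+1} be positive reals with p_{j−1}+p_j+p_{j+1} = p'_{j−1}+p'_j+p'_{j+1}, and suppose (r_{a,b}) is a nonnegative 3×3 matrix (scaled by p := the common total) satisfying: p(r_{a,1}+r_{a,2}+r_{a,3}) = p'_{j+a−2} for a = 1,2,3; p(r_{1,b}+r_{2,b}+r_{3,b}) = p_{j+b−2} for b = 1,2,3; and p(r_{1,b}ε'_{j−1} + r_{2,b}ε'_j + r_{3,b}ε'_{j+1}) = p_{j+b−2}·ε_{j+b−2}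 for b = 1,2,3. Write x = p_{j−1} − p'_{j−1}, y = p_{j+1} − p'_{j+1}, δ₁ = (p_{j−1}ε_{j−1} − p'_{j−1}ε'_{j−1})/x, δ₂ = (p_{j+1}ε_{j+1} − p'_{j+1}ε'_{j+1})/y. If x > 0, y > 0, ε_{j−1} ≤ δ₁ ≤ ε_j ≤ δ₂ ≤ ε_{j+1}, and δ₁ < δ₂, then p·(r_{1,2}+r_{1,3})·(ε'_{j−1} − ε'_j) + p·r_{3,1}·(ε'_j − ε'_{j+1}) = (xy(δ₂−δ₁) + p_j·x·(ε_j−δ₁))/(p_j + x + y) > 0, contradicting ε'_{j−1} < ε'_j < ε'_{j+1}; hence no such matrix (r_{a,b}) exists. -/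
theorem no_consecutive_upgrade
    (e1 e2 e3 e1' e2' e3' p1 p2 p3 p1' p2' p3' : ℝ)
    (he0 : 0 ≤ e1) (heh : e3 ≤ 1/2) (he12 : e1 < e2) (he23 : e2 < e3)
    (he0' : 0 ≤ e1') (heh' : e3' ≤ 1/2) (he12' : e1' < e2') (he23' : e2' < e3')
    (hp1 : 0 < p1) (hp2 : 0 < p2) (hp3 : 0 < p3)
    (hp1' : 0 < p1') (hp2' : 0 < p2') (hp3' : 0 < p3')
    (htot : p1 + p2 + p3 = p1' + p2' + p3')
    (hx : 0 < p1 - p1') (hy : 0 < p3 - p3')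
    (hδ1l : e1 ≤ (p1 * e1 - p1' * e1') / (p1 - p1'))
    (hδ1r : (p1 * e1 - p1' * e1') / (p1 - p1') ≤ e2)
    (hδ2l : e2 ≤ (p3 * e3 - p3' * e3') / (p3 - p3'))
    (hδ2r : (p3 * e3 - p3' * e3') / (p3 - p3') ≤ e3)
    (hδ12 : (p1 * e1 - p1' * e1') / (p1 - p1') < (p3 * e3 - p3' * e3') / (p3 - p3')) :
    ¬ ∃ r : Fin 3 → Fin 3 → ℝ,
      (∀ a b, 0 ≤ r a b) ∧
      (p1 + p2 + p3) * (r 0 0 + r 0 1 + r 0 2) = p1' ∧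
      (p1 + p2 + p3) * (r 1 0 + r 1 1 + r 1 2) = p2' ∧
      (p1 + p2 + p3) * (r 2 0 + r 2 1 + r 2 2) = p3' ∧
      (p1 + p2 + p3) * (r 0 0 + r 1 0 + r 2 0) = p1 ∧
      (p1 + p2 + p3) * (r 0 1 + r 1 1 + r 2 1) = p2 ∧
      (p1 + p2 + p3) * (r 0 2 + r 1 2 + r 2 2) = p3 ∧
      (p1 + p2 + p3) * (r 0 0 * e1' + r 1 0 * e2' + r 2 0 * e3') = p1 * e1 ∧
      (p1 + p2 + p3) * (r 0 1 * e1' + r 1 1 * e2' + r 2 1 * e3') = p2 * e2 ∧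
      (p1 + p2 + p3) * (r 0 2 * e1' + r 1 2 * e2' + r 2 2 * e3') = p3 * e3 := by
  rintro ⟨r, hr, h1, h2, h3, h4, h5, h6, h7, h8, h9⟩
  set p : ℝ := p1 + p2 + p3 with hp
  have hppos : 0 < p := by positivity
  -- the key algebraic identity
  have key : p2' * ((p * (r 0 1 + r 0 2)) * (e1' - e2') + (p * r 2 0) * (e2' - e3'))
      = (p1 - p1') * (p3 * e3 - p3' * e3') - (p3 - p3') * (p1 * e1 - p1' * e1')
        + p2 * (p1 - p1') * e2 - p2 * (p1 * e1 - p1' * e1') := by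
    linear_combination (p2' * (e1' - e2') - (p1 - p1') * e1') * h1
      + (-(p1 - p1') * e2') * h2 + (-(p1 - p1') * e3') * h3
      + (p2' * e2') * h4
      + ((p1 - p1') - p2') * h7 + (p1 - p1') * h8 + (p1 - p1') * h9
      + (p1 * e1 - p1' * e1') * htot
  -- the right-hand side is positive
  have h12 : (p1 * e1 - p1' * e1') * (p3 - p3') < (p3 * e3 - p3' * e3') * (p1 - p1') :=
    (div_lt_div_iff₀ hx hy).mp hδ12
  have h1r : p1 * e1 - p1' * e1' ≤ e2 * (p1 - p1') := (div_le_iff₀ hx).mp hδ1r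
  have hrhs : 0 < (p1 - p1') * (p3 * e3 - p3' * e3') - (p3 - p3') * (p1 * e1 - p1' * e1')
        + p2 * (p1 - p1') * e2 - p2 * (p1 * e1 - p1' * e1') := by
    nlinarith [mul_le_mul_of_nonneg_left h1r hp2.le]
  -- the left-hand side is nonpositive
  have hlhs : p2' * ((p * (r 0 1 + r 0 2)) * (e1' - e2') + (p * r 2 0) * (e2' - e3')) ≤ 0 := by
    have h01 := hr 0 1
    have h02 := hr 0 2
    have h20 := hr 2 0
    have t1 : (p * (r 0 1 + r 0 2)) * (e1' - e2') ≤ 0 :=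
      mul_nonpos_of_nonneg_of_nonpos (mul_nonneg hppos.le (add_nonneg h01 h02))
        (by linarith)
    have t2 : (p * r 2 0) * (e2' - e3') ≤ 0 :=
      mul_nonpos_of_nonneg_of_nonpos (mul_nonneg hppos.le h20) (by linarith)
    exact mul_nonpos_of_nonneg_of_nonpos hp2'.le (by linarith)
  linarith
end
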